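/- arXiv:2312.08855 — 7 statements merged into one kernel-verified Lean document; each statement's English description precedes it below -/
import Mathlib

section
/- Let A ∈ ℂ^{n×n}, B ∈ ℂ^{n×m}, C ∈ ℂ^{p×n}. Let V ∈ ℂ^{n×q} satisfy VᴴV = I_q, let K, H ∈ ℂ^{q×s} satisfy the Arnoldi-type relation AᴴVK = VH, and let C̃ ∈ ℂ^{q×p} satisfy Cᴴ = VC̃. For Y ∈ ℂ^{s×s} set X := V K Y Kᴴ Vᴴ and S := Kᴴ Vᴴ B Bᴴ V K ∈ ℂ^{s×s}. Then the Riccati residual satisfies R(X) = V ( H Y Kᴴ + K Y Hᴴ + C̃C̃ᴴ − K Y S Y Kᴴ ) Vᴴ. -/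
open Matrix

/-- The Riccati residual `R(X) = AᴴX + XA + CᴴC − XBBᴴX`. -/
noncomputable def riccatiResidual {n m p : ℕ} (A : Matrix (Fin n) (Fin n) ℂ)
    (B : Matrix (Fin n) (Fin m) ℂ) (C : Matrix (Fin p) (Fin n) ℂ)
    (X : Matrix (Fin n) (Fin n) ℂ) : Matrix (Fin n) (Fin n) ℂ :=
  Aᴴ * X + X * A + Cᴴ * C - X * B * Bᴴ * X

/-- representation of the Riccati residual of `X = V K Y Kᴴ Vᴴ`
via the Arnoldi-type relation `AᴴVK = VH`. -/
theorem stmt_1 {n m p q s : ℕ}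
    (A : Matrix (Fin n) (Fin n) ℂ) (B : Matrix (Fin n) (Fin m) ℂ)
    (C : Matrix (Fin p) (Fin n) ℂ)
    (V : Matrix (Fin n) (Fin q) ℂ) (hV : Vᴴ * V = 1)
    (K H : Matrix (Fin q) (Fin s) ℂ) (hKH : Aᴴ * V * K = V * H)
    (Ct : Matrix (Fin q) (Fin p) ℂ) (hCt : Cᴴ = V * Ct)
    (Y : Matrix (Fin s) (Fin s) ℂ)
    (X : Matrix (Fin n) (Fin n) ℂ) (hX : X = V * K * Y * Kᴴ * Vᴴ)
    (S : Matrix (Fin s) (Fin s) ℂ) (hS : S = Kᴴ * Vᴴ * B * Bᴴ * V * K) :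
    riccatiResidual A B C X =
      V * (H * Y * Kᴴ + K * Y * Hᴴ + Ct * Ctᴴ - K * Y * S * Y * Kᴴ) * Vᴴ := by
  have hC : C = Ctᴴ * Vᴴ := by
    have := congrArg conjTranspose hCt
    simpa [conjTranspose_mul] using this
  have h1 : Aᴴ * X = V * (H * Y * Kᴴ) * Vᴴ := by
    rw [hX]
    calc Aᴴ * (V * K * Y * Kᴴ * Vᴴ) = (Aᴴ * V * K) * Y * Kᴴ * Vᴴ := by
          simp only [Matrix.mul_assoc]
      _ = V * H * Y * Kᴴ * Vᴴ := by rw [hKH]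
      _ = V * (H * Y * Kᴴ) * Vᴴ := by simp only [Matrix.mul_assoc]
  have hKH' : Kᴴ * (Vᴴ * A) = Hᴴ * Vᴴ := by
    have := congrArg conjTranspose hKH
    simpa [conjTranspose_mul, Matrix.mul_assoc] using this
  have h2 : X * A = V * (K * Y * Hᴴ) * Vᴴ := by
    rw [hX]
    calc V * K * Y * Kᴴ * Vᴴ * A = V * K * Y * (Kᴴ * (Vᴴ * A)) := by
          simp only [Matrix.mul_assoc]
      _ = V * K * Y * (Hᴴ * Vᴴ) := by rw [hKH']
      _ = V * (K * Y * Hᴴ) * Vᴴ := by simp only [Matrix.mul_assoc]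
  have h3 : Cᴴ * C = V * (Ct * Ctᴴ) * Vᴴ := by
    rw [hCt, hC]; simp only [Matrix.mul_assoc]
  have h4 : X * B * Bᴴ * X = V * (K * Y * S * Y * Kᴴ) * Vᴴ := by
    rw [hX, hS]; simp only [Matrix.mul_assoc]
  rw [riccatiResidual, h1, h2, h3, h4, ← Matrix.add_mul, ← Matrix.mul_add,
    ← Matrix.add_mul, ← Matrix.mul_add, ← Matrix.sub_mul, ← Matrix.mul_sub]
end

section
/- Let A ∈ ℂ^{n×n}, B ∈ ℂ^{n×m}, C ∈ ℂ^{p×n}. Let V ∈ ℂ^{n×q} satisfy VᴴV = I_q, let K, H ∈ ℂ^{q×s} satisfy AᴴVK = VH, where K has full column rank (Kx = 0 implies x = 0), and let C̃ ∈ ℂ^{q×p} satisfy Cᴴ = VC̃. Let L ∈ ℂ^{q×s} be such that LᴴK is invertible, and set π := K(LᴴK)⁻¹Lᴴ and Π := VπVᴴ. For Y ∈ ℂ^{s×s} set X := V K Y Kᴴ Vᴴ, and define the reduced matrices A_s := Hᴴ L (KᴴL)⁻¹ ∈ ℂ^{s×s}, B_s := Kᴴ Vᴴ B ∈ ℂ^{s×m},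 C_s := C̃ᴴ L (KᴴL)⁻¹ ∈ ℂ^{p×s}. Then Π R(X) Πᴴ = 0 holds if and only if Y solves the reduced Riccati equation A_sᴴ Y + Y A_s + C_sᴴ C_s − Y B_s B_sᴴ Y = 0. -/
open Matrix

/-- the projected Riccati equation `Π R(X) Πᴴ = 0` is equivalent to
the reduced Riccati equation for `Y`. -/
theorem stmt_2 {n m p q s : ℕ}
    (A : Matrix (Fin n) (Fin n) ℂ) (B : Matrix (Fin n) (Fin m) ℂ)
    (C : Matrix (Fin p) (Fin n) ℂ)
    (V : Matrix (Fin n) (Fin q) ℂ) (hV : Vᴴ * V = 1)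
    (K H : Matrix (Fin q) (Fin s) ℂ) (hKH : Aᴴ * V * K = V * H)
    (hK : ∀ x : Fin s → ℂ, K.mulVec x = 0 → x = 0)
    (Ct : Matrix (Fin q) (Fin p) ℂ) (hCt : Cᴴ = V * Ct)
    (L : Matrix (Fin q) (Fin s) ℂ) (hLK : IsUnit (Lᴴ * K))
    (pr : Matrix (Fin q) (Fin q) ℂ) (hpr : pr = K * (Lᴴ * K)⁻¹ * Lᴴ)
    (Pr : Matrix (Fin n) (Fin n) ℂ) (hPr : Pr = V * pr * Vᴴ)
    (Y : Matrix (Fin s) (Fin s) ℂ)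
    (X : Matrix (Fin n) (Fin n) ℂ) (hX : X = V * K * Y * Kᴴ * Vᴴ)
    (As : Matrix (Fin s) (Fin s) ℂ) (hAs : As = Hᴴ * L * (Kᴴ * L)⁻¹)
    (Bs : Matrix (Fin s) (Fin m) ℂ) (hBs : Bs = Kᴴ * Vᴴ * B)
    (Cs : Matrix (Fin p) (Fin s) ℂ) (hCs : Cs = Ctᴴ * L * (Kᴴ * L)⁻¹) :
    Pr * riccatiResidual A B C X * Prᴴ = 0 ↔
      Asᴴ * Y + Y * As + Csᴴ * Cs - Y * Bs * Bsᴴ * Y = 0 := by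
  have hdet : IsUnit (Lᴴ * K).det := (Matrix.isUnit_iff_isUnit_det _).mp hLK
  have hMK : (Lᴴ * K)⁻¹ * (Lᴴ * K) = 1 := Matrix.nonsing_inv_mul _ hdet
  have hKM : (Lᴴ * K) * (Lᴴ * K)⁻¹ = 1 := Matrix.mul_nonsing_inv _ hdet
  have hinvKL : (Kᴴ * L)⁻¹ = ((Lᴴ * K)⁻¹)ᴴ := by
    rw [Matrix.conjTranspose_nonsing_inv]
    congr 1
    simp [Matrix.conjTranspose_mul]
  have hC : C = Ctᴴ * Vᴴ := by
    have h := congrArg conjTranspose hCt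
    simpa [Matrix.conjTranspose_mul] using h
  have hprK : pr * K = K := by
    rw [hpr, Matrix.mul_assoc, Matrix.mul_assoc, hMK, Matrix.mul_one]
  have hKprT : Kᴴ * prᴴ = Kᴴ := by
    have h := congrArg conjTranspose hprK
    simpa [Matrix.conjTranspose_mul] using h
  have hKVA0 : Kᴴ * Vᴴ * A = Hᴴ * Vᴴ := by
    calc Kᴴ * Vᴴ * A = (Aᴴ * V * K)ᴴ := by
          simp [Matrix.conjTranspose_mul, Matrix.mul_assoc]
      _ = (V * H)ᴴ := by rw [hKH]
      _ = Hᴴ * Vᴴ := by simp [Matrix.conjTranspose_mul]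
  have hAsT : Asᴴ = (Lᴴ * K)⁻¹ * (Lᴴ * H) := by
    rw [hAs, hinvKL]
    simp [Matrix.conjTranspose_mul, Matrix.mul_assoc]
  have hCsT : Csᴴ = (Lᴴ * K)⁻¹ * (Lᴴ * Ct) := by
    rw [hCs, hinvKL]
    simp [Matrix.conjTranspose_mul, Matrix.mul_assoc]
  -- rewriting rules
  have rV : ∀ {k : ℕ} (t : Matrix (Fin q) (Fin k) ℂ), Vᴴ * (V * t) = t := by
    intro k t; rw [← Matrix.mul_assoc, hV, Matrix.one_mul]
  have rprK : ∀ {k : ℕ} (t : Matrix (Fin s) (Fin k) ℂ), pr * (K * t) = K * t := by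
    intro k t; rw [← Matrix.mul_assoc, hprK]
  have rKpr : ∀ {k : ℕ} (t : Matrix (Fin q) (Fin k) ℂ), Kᴴ * (prᴴ * t) = Kᴴ * t := by
    intro k t; rw [← Matrix.mul_assoc, hKprT]
  have rAVK : ∀ {k : ℕ} (t : Matrix (Fin s) (Fin k) ℂ),
      Aᴴ * (V * (K * t)) = V * (H * t) := by
    intro k t
    rw [← Matrix.mul_assoc, ← Matrix.mul_assoc, hKH, Matrix.mul_assoc]
  have rKVA : ∀ {k : ℕ} (t : Matrix (Fin n) (Fin k) ℂ),
      Kᴴ * (Vᴴ * (A * t)) = Hᴴ * (Vᴴ * t) := by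
    intro k t
    rw [← Matrix.mul_assoc, ← Matrix.mul_assoc, hKVA0, Matrix.mul_assoc]
  have rprH : ∀ {k : ℕ} (t : Matrix (Fin s) (Fin k) ℂ),
      pr * (H * t) = K * (Asᴴ * t) := by
    intro k t; simp [hpr, hAsT, Matrix.mul_assoc]
  have rHpr : ∀ {k : ℕ} (t : Matrix (Fin q) (Fin k) ℂ),
      Hᴴ * (prᴴ * t) = As * (Kᴴ * t) := by
    intro k t; simp [hpr, hAs, hinvKL, Matrix.conjTranspose_mul, Matrix.mul_assoc]
  have rprCt : ∀ {k : ℕ} (t : Matrix (Fin p) (Fin k) ℂ),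
      pr * (Ct * t) = K * (Csᴴ * t) := by
    intro k t; simp [hpr, hCsT, Matrix.mul_assoc]
  have rCtpr : ∀ {k : ℕ} (t : Matrix (Fin q) (Fin k) ℂ),
      Ctᴴ * (prᴴ * t) = Cs * (Kᴴ * t) := by
    intro k t; simp [hpr, hCs, hinvKL, Matrix.conjTranspose_mul, Matrix.mul_assoc]
  have rB : ∀ {k : ℕ} (t : Matrix (Fin m) (Fin k) ℂ),
      Kᴴ * (Vᴴ * (B * t)) = Bs * t := by
    intro k t; simp [hBs, Matrix.mul_assoc]
  have rB' : ∀ {k : ℕ} (t : Matrix (Fin s) (Fin k) ℂ),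
      Bᴴ * (V * (K * t)) = Bsᴴ * t := by
    intro k t; simp [hBs, Matrix.conjTranspose_mul, Matrix.mul_assoc]
  have hmain : Pr * riccatiResidual A B C X * Prᴴ
      = V * (K * ((Asᴴ * Y + Y * As + Csᴴ * Cs - Y * Bs * Bsᴴ * Y) * (Kᴴ * Vᴴ))) := by
    rw [riccatiResidual, hPr, hX, hCt, hC]
    simp only [Matrix.conjTranspose_mul, Matrix.conjTranspose_conjTranspose,
      Matrix.mul_add, Matrix.add_mul, Matrix.mul_sub, Matrix.sub_mul, Matrix.mul_assoc]
    simp only [rV, rprK, rKpr, rAVK, rKVA, rprH, rHpr, rprCt, rCtpr, rB, rB']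
  have hKinj : ∀ {t : ℕ} (N : Matrix (Fin s) (Fin t) ℂ), K * N = 0 → N = 0 := by
    intro t N hN
    ext i j
    have hcol : K.mulVec (fun k => N k j) = 0 := by
      ext r
      have h := congrFun (congrFun hN r) j
      simpa [Matrix.mulVec, Matrix.mul_apply, dotProduct] using h
    have h0 := hK _ hcol
    exact congrFun h0 i
  constructor
  · intro h
    have h0 : V * (K * ((Asᴴ * Y + Y * As + Csᴴ * Cs - Y * Bs * Bsᴴ * Y) * (Kᴴ * Vᴴ))) = 0 := by
      rw [← hmain]; exact h
    have h1 : K * ((Asᴴ * Y + Y * As + Csᴴ * Cs - Y * Bs * Bsᴴ * Y) * Kᴴ) = 0 := by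
      have h2 := congrArg (fun Z => Vᴴ * Z * V) h0
      simpa [Matrix.mul_assoc, rV, hV, Matrix.mul_one, Matrix.mul_zero, Matrix.zero_mul] using h2
    have h3 : (Asᴴ * Y + Y * As + Csᴴ * Cs - Y * Bs * Bsᴴ * Y) * Kᴴ = 0 := hKinj _ h1
    have h4 : K * (Asᴴ * Y + Y * As + Csᴴ * Cs - Y * Bs * Bsᴴ * Y)ᴴ = 0 := by
      have h5 := congrArg conjTranspose h3
      simpa [Matrix.conjTranspose_mul] using h5
    have h6 := hKinj _ h4
    calc Asᴴ * Y + Y * As + Csᴴ * Cs - Y * Bs * Bsᴴ * Y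
        = ((Asᴴ * Y + Y * As + Csᴴ * Cs - Y * Bs * Bsᴴ * Y)ᴴ)ᴴ := by simp
      _ = 0 := by rw [h6]; simp
  · intro h
    rw [hmain, h]
    simp
end

section
/- Let A ∈ ℂ^{n×n}, B ∈ ℂ^{n×m}, C ∈ ℂ^{p×n}. Let V ∈ ℂ^{n×q} satisfy VᴴV = I_q, let K, H ∈ ℂ^{q×s} satisfy AᴴVK = VH, and let C̃ ∈ ℂ^{q×p} satisfy Cᴴ = VC̃. Let L ∈ ℂ^{q×s} be such that LᴴK is invertible, and set π := K(LᴴK)⁻¹Lᴴ, π̃ := I − π. Let Y ∈ ℂ^{s×s} be Hermitian, set X := V K Y Kᴴ Vᴴ, S := Kᴴ Vᴴ B Bᴴ V K, and suppose π (H Y Kᴴ + K Y Hᴴ + C̃C̃ᴴ − K Y S Y Kᴴ) πᴴ = 0. Then, with Υ := K Y Hᴴ + (I − (1/2)π̃) C̃C̃ᴴ ∈ ℂ^{q×q}, the Riccati residual satisfies R(X) = V ( π̃ Υᴴ + Υ π̃ᴴ ) Vᴴ. -/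
open Matrix

/-- representation `R(X) = V (π̃ Υᴴ + Υ π̃ᴴ) Vᴴ` of the Riccati
residual when `Y` solves the projected equation. -/
theorem stmt_4 {n m p q s : ℕ}
    (A : Matrix (Fin n) (Fin n) ℂ) (B : Matrix (Fin n) (Fin m) ℂ)
    (C : Matrix (Fin p) (Fin n) ℂ)
    (V : Matrix (Fin n) (Fin q) ℂ) (hV : Vᴴ * V = 1)
    (K H : Matrix (Fin q) (Fin s) ℂ) (hKH : Aᴴ * V * K = V * H)
    (Ct : Matrix (Fin q) (Fin p) ℂ) (hCt : Cᴴ = V * Ct)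
    (L : Matrix (Fin q) (Fin s) ℂ) (hLK : IsUnit (Lᴴ * K))
    (pr : Matrix (Fin q) (Fin q) ℂ) (hpr : pr = K * (Lᴴ * K)⁻¹ * Lᴴ)
    (pt : Matrix (Fin q) (Fin q) ℂ) (hpt : pt = 1 - pr)
    (Y : Matrix (Fin s) (Fin s) ℂ) (hY : Yᴴ = Y)
    (X : Matrix (Fin n) (Fin n) ℂ) (hX : X = V * K * Y * Kᴴ * Vᴴ)
    (S : Matrix (Fin s) (Fin s) ℂ) (hS : S = Kᴴ * Vᴴ * B * Bᴴ * V * K)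
    (hproj : pr * (H * Y * Kᴴ + K * Y * Hᴴ + Ct * Ctᴴ - K * Y * S * Y * Kᴴ)
        * prᴴ = 0)
    (Ups : Matrix (Fin q) (Fin q) ℂ)
    (hUps : Ups = K * Y * Hᴴ + (1 - (1/2 : ℂ) • pt) * (Ct * Ctᴴ)) :
    riccatiResidual A B C X = V * (pt * Upsᴴ + Ups * ptᴴ) * Vᴴ := by
  -- key invertibility facts
  have hdet : IsUnit (Lᴴ * K).det := (Matrix.isUnit_iff_isUnit_det _).mp hLK
  have hinv : (Lᴴ * K)⁻¹ * (Lᴴ * K) = 1 := Matrix.nonsing_inv_mul _ hdet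
  have hprK : pr * K = K := by
    rw [hpr, Matrix.mul_assoc, Matrix.mul_assoc, hinv, Matrix.mul_one]
  have hptK : pt * K = 0 := by rw [hpt, Matrix.sub_mul, Matrix.one_mul, hprK, sub_self]
  have hKpt : Kᴴ * ptᴴ = 0 := by
    rw [← conjTranspose_mul, hptK, conjTranspose_zero]
  -- Hermitian facts
  have hSH : Sᴴ = S := by
    rw [hS]; simp [Matrix.mul_assoc]
  obtain ⟨G, hG⟩ : ∃ G : Matrix (Fin q) (Fin q) ℂ, G = Ct * Ctᴴ := ⟨_, rfl⟩
  have hGH : Gᴴ = G := by simp [hG]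
  obtain ⟨M, hM⟩ : ∃ M : Matrix (Fin q) (Fin q) ℂ,
      M = H * Y * Kᴴ + K * Y * Hᴴ + G - K * Y * S * Y * Kᴴ := ⟨_, rfl⟩
  rw [hG] at hM
  have hz : pr * M * prᴴ = 0 := by rw [hM]; exact hproj
  -- Step 1: R(X) = V M Vᴴ
  have hKVA : Kᴴ * (Vᴴ * A) = Hᴴ * Vᴴ := by
    have := congrArg conjTranspose hKH
    simpa [Matrix.mul_assoc] using this
  have h1 : riccatiResidual A B C X = V * M * Vᴴ := by
    rw [riccatiResidual, hX, hM]
    have hC : C = Ctᴴ * Vᴴ := by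
      have := congrArg conjTranspose hCt
      simpa using this
    rw [hCt, hC, hS]
    simp only [Matrix.mul_add, Matrix.add_mul, Matrix.mul_sub, Matrix.sub_mul]
    congr 1
    · congr 1
      · congr 1
        · simp only [← Matrix.mul_assoc]
          rw [hKH]
        · simp only [Matrix.mul_assoc]
          rw [hKVA]
      · simp [Matrix.mul_assoc]
    · simp [Matrix.mul_assoc]
  rw [h1]
  congr 2
  rw [← hG] at hM hUps
  -- Step 2: M = pt Upsᴴ + Ups ptᴴ
  have hUpsH : Upsᴴ = H * Y * Kᴴ + G * (1 - (1/2 : ℂ) • ptᴴ) := by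
    rw [hUps]
    simp [Matrix.mul_assoc, hY, hGH, conjTranspose_smul, Matrix.mul_sub, Matrix.sub_mul,
      Matrix.smul_mul, Matrix.mul_smul]
  have h2 : pt * M = pt * (H * Y * Kᴴ) + pt * G := by
    rw [hM]
    simp only [Matrix.mul_add, Matrix.mul_sub, ← Matrix.mul_assoc, hptK, Matrix.zero_mul]
    abel
  have h3 : M * ptᴴ = K * Y * Hᴴ * ptᴴ + G * ptᴴ := by
    rw [hM]
    simp only [Matrix.add_mul, Matrix.sub_mul, Matrix.mul_assoc, hKpt, Matrix.mul_zero]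
    abel
  have h4 : pt * M * ptᴴ = pt * G * ptᴴ := by
    rw [Matrix.mul_assoc, h3]
    simp only [Matrix.mul_add, ← Matrix.mul_assoc, hptK, Matrix.zero_mul, zero_add]
  have h5 : pt * Upsᴴ + Ups * ptᴴ = pt * M + M * ptᴴ - pt * M * ptᴴ := by
    rw [hUpsH, hUps, h4, h2, h3]
    simp only [Matrix.mul_add, Matrix.add_mul, Matrix.mul_sub, Matrix.sub_mul,
      Matrix.mul_one, Matrix.one_mul, smul_mul_assoc, Matrix.mul_smul,
      ← Matrix.mul_assoc]
    module
  -- conclude using hz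
  rw [h5]
  have hpr' : pr = 1 - pt := by rw [hpt, sub_sub_cancel]
  rw [hpr'] at hz
  simp only [conjTranspose_sub, conjTranspose_one, Matrix.sub_mul, Matrix.mul_sub,
    Matrix.one_mul, Matrix.mul_one] at hz
  linear_combination (norm := module) hz
end

section
/- Let q = s + t with t ≥ 1, let K, L ∈ ℂ^{q×s} be such that LᴴK is invertible, and let U, W ∈ ℂ^{q×t} have full column rank (Ux = 0 implies x = 0, and Wx = 0 implies x = 0) with LᴴU = 0 and KᴴW = 0. Then WᴴU is invertible and I − K(LᴴK)⁻¹Lᴴ = U(WᴴU)⁻¹Wᴴ. -/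
/-! If `Lx + Wy = 0`, applying `Kᴴ` gives `KᴴLx = 0`, so `x = 0` and then `y = 0`: the square
matrix `[L | W]` is nonsingular, hence so is its conjugate transpose `[Lᴴ ; Wᴴ]`, i.e. only zero is
killed by both `Lᴴ` and `Wᴴ`. Since `LᴴU = 0`, this makes `WᴴU` nonsingular, and the difference
`I - K(LᴴK)⁻¹Lᴴ - U(WᴴU)⁻¹Wᴴ` is killed by both `Lᴴ` and `Wᴴ`, so it vanishes. -/

open Matrix

namespace Matrix

variable {m n p : Type*}

lemma mulVec_injective_of_ker_eq_zero {R : Type*} [CommRing R] [Fintype n] {A : Matrix m n R}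
    (hA : ∀ v, A *ᵥ v = 0 → v = 0) : Function.Injective A.mulVec :=
  (injective_iff_map_eq_zero A.mulVecLin).2 hA

variable [Fintype m] [Fintype n] [Fintype p]

lemma eq_zero_of_fromCols_mulVec_eq_zero {R : Type*} [CommRing R] [DecidableEq n]
    {A : Matrix m n R} {B : Matrix m p R} {C : Matrix n m R} (hCA : IsUnit (C * A))
    (hCB : C * B = 0) (hB : ∀ v, B *ᵥ v = 0 → v = 0) (w : n ⊕ p → R)
    (hw : fromCols A B *ᵥ w = 0) : w = 0 := by
  rw [← Sum.elim_comp_inl_inr w, fromCols_mulVec_sumElim] at hw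
  have hx : w ∘ Sum.inl = 0 := mulVec_injective_of_isUnit hCA <| by
    simpa [mulVec_add, mulVec_mulVec, hCB] using congrArg (C *ᵥ ·) hw
  have hy : w ∘ Sum.inr = 0 := hB _ (by simpa [hx] using hw)
  rw [← Sum.elim_comp_inl_inr w, hx, hy]
  ext (i | i) <;> rfl

lemma conjTranspose_mulVec_injective_of_card_eq {𝕜 : Type*} [Field 𝕜] [StarRing 𝕜]
    {A : Matrix m n 𝕜} (hcard : Fintype.card m = Fintype.card n)
    (hA : Function.Injective A.mulVec) : Function.Injective Aᴴ.mulVec := by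
  classical
  let e := Fintype.equivOfCardEq hcard
  have hsq : IsUnit (A.submatrix id e) := by
    refine mulVec_injective_iff_isUnit.1 fun v w hvw => ?_
    rw [submatrix_mulVec_equiv, submatrix_mulVec_equiv] at hvw
    simpa [Function.comp_assoc] using congrArg (· ∘ e) (hA hvw)
  intro v w hvw
  refine mulVec_injective_of_isUnit ((isUnit_conjTranspose _).2 hsq) ?_
  rw [conjTranspose_submatrix]
  exact congrArg (· ∘ e) hvw

lemma mul_mul_nonsing_inv_mul_cancel {R : Type*} [CommRing R] [DecidableEq n] (A : Matrix n m R)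
    (B : Matrix m n R) (h : IsUnit (A * B)) : A * (B * (A * B)⁻¹ * A) = A := by
  rw [← Matrix.mul_assoc, ← Matrix.mul_assoc, mul_nonsing_inv _ ((isUnit_iff_isUnit_det _).1 h),
    Matrix.one_mul]

section JointKernel

variable {𝕜 : Type*} [Field 𝕜] [StarRing 𝕜] [DecidableEq n] {K L : Matrix m n 𝕜}
  {W : Matrix m p 𝕜}

lemma eq_zero_of_conjTranspose_mulVec_eq_zero
    (hcard : Fintype.card m = Fintype.card n + Fintype.card p)
    (hLK : IsUnit (Lᴴ * K)) (hKW : Kᴴ * W = 0) (hW : ∀ v, W *ᵥ v = 0 → v = 0) {v : m → 𝕜}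
    (hLv : Lᴴ *ᵥ v = 0) (hWv : Wᴴ *ᵥ v = 0) : v = 0 := by
  have hKL : IsUnit (Kᴴ * L) := by
    simpa [conjTranspose_mul] using (isUnit_conjTranspose _).2 hLK
  have hinj : Function.Injective (fromCols L W)ᴴ.mulVec :=
    conjTranspose_mulVec_injective_of_card_eq (by simp [hcard])
      (mulVec_injective_of_ker_eq_zero (eq_zero_of_fromCols_mulVec_eq_zero hKL hKW hW))
  refine hinj ?_
  rw [conjTranspose_fromCols_eq_fromRows_conjTranspose, fromRows_mulVec, hLv, hWv, mulVec_zero]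
  ext (i | i) <;> rfl

lemma eq_zero_of_conjTranspose_mul_eq_zero {q : Type*} [Fintype q]
    (hcard : Fintype.card m = Fintype.card n + Fintype.card p)
    (hLK : IsUnit (Lᴴ * K)) (hKW : Kᴴ * W = 0) (hW : ∀ v, W *ᵥ v = 0 → v = 0) {M : Matrix m q 𝕜}
    (hLM : Lᴴ * M = 0) (hWM : Wᴴ * M = 0) : M = 0 :=
  ext_iff_mulVec.2 fun x => by
    simpa using eq_zero_of_conjTranspose_mulVec_eq_zero hcard hLK hKW hW
      (by rw [mulVec_mulVec, hLM, zero_mulVec]) (by rw [mulVec_mulVec, hWM, zero_mulVec])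

end JointKernel

end Matrix

theorem stmt_5_general {s t : ℕ}
    (K L : Matrix (Fin (s + t)) (Fin s) ℂ) (hLK : IsUnit (Lᴴ * K))
    (U W : Matrix (Fin (s + t)) (Fin t) ℂ)
    (hU : ∀ x : Fin t → ℂ, U.mulVec x = 0 → x = 0)
    (hW : ∀ x : Fin t → ℂ, W.mulVec x = 0 → x = 0)
    (hLU : Lᴴ * U = 0) (hKW : Kᴴ * W = 0) :
    IsUnit (Wᴴ * U) ∧
      (1 : Matrix (Fin (s + t)) (Fin (s + t)) ℂ) - K * (Lᴴ * K)⁻¹ * Lᴴ =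
        U * (Wᴴ * U)⁻¹ * Wᴴ := by
  have hcard : Fintype.card (Fin (s + t)) = Fintype.card (Fin s) + Fintype.card (Fin t) := by simp
  have hWK : Wᴴ * K = 0 := by simpa [conjTranspose_mul] using congrArg conjTranspose hKW
  have hWU : IsUnit (Wᴴ * U) := by
    refine mulVec_injective_iff_isUnit.1 <| mulVec_injective_of_ker_eq_zero fun x hx => hU x ?_
    refine eq_zero_of_conjTranspose_mulVec_eq_zero hcard hLK hKW hW ?_ (by rwa [mulVec_mulVec])
    rw [mulVec_mulVec, hLU, zero_mulVec]
  refine ⟨hWU, eq_of_sub_eq_zero (eq_zero_of_conjTranspose_mul_eq_zero hcard hLK hKW hW ?_ ?_)⟩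
  · rw [Matrix.mul_sub, Matrix.mul_sub, Matrix.mul_one, mul_mul_nonsing_inv_mul_cancel _ _ hLK,
      ← Matrix.mul_assoc, ← Matrix.mul_assoc, hLU, Matrix.zero_mul, Matrix.zero_mul,
      sub_self, sub_zero]
  · rw [Matrix.mul_sub, Matrix.mul_sub, Matrix.mul_one, mul_mul_nonsing_inv_mul_cancel _ _ hWU,
      ← Matrix.mul_assoc, ← Matrix.mul_assoc, hWK, Matrix.zero_mul, Matrix.zero_mul,
      sub_zero, sub_self]

/-- the complementary projection `I − K(LᴴK)⁻¹Lᴴ` equals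
`U(WᴴU)⁻¹Wᴴ` when `range U = (range L)ᗮ` and `range W = (range K)ᗮ`
(expressed via `LᴴU = 0`, `KᴴW = 0` and full column rank of `U, W`). -/
theorem stmt_5 {s t : ℕ} (ht : 1 ≤ t)
    (K L : Matrix (Fin (s + t)) (Fin s) ℂ) (hLK : IsUnit (Lᴴ * K))
    (U W : Matrix (Fin (s + t)) (Fin t) ℂ)
    (hU : ∀ x : Fin t → ℂ, U.mulVec x = 0 → x = 0)
    (hW : ∀ x : Fin t → ℂ, W.mulVec x = 0 → x = 0)
    (hLU : Lᴴ * U = 0) (hKW : Kᴴ * W = 0) :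
    IsUnit (Wᴴ * U) ∧
      (1 : Matrix (Fin (s + t)) (Fin (s + t)) ℂ) - K * (Lᴴ * K)⁻¹ * Lᴴ =
        U * (Wᴴ * U)⁻¹ * Wᴴ :=
  stmt_5_general K L hLK U W hU hW hLU hKW
end

section
/- Let A ∈ ℂ^{n×n}, B ∈ ℂ^{n×m}, C ∈ ℂ^{p×n}. Let V ∈ ℂ^{n×q} satisfy VᴴV = I_q, let K, H ∈ ℂ^{q×s} satisfy AᴴVK = VH, and let C̃ ∈ ℂ^{q×p} satisfy Cᴴ = VC̃. Let L ∈ ℂ^{q×s} be such that LᴴK is invertible, and set π := K(LᴴK)⁻¹Lᴴ, π̃ := I − π. Let Y ∈ ℂ^{s×s} be Hermitian, set X := V K Y Kᴴ Vᴴ, S := Kᴴ Vᴴ B Bᴴ V K, and suppose π (H Y Kᴴ + K Y Hᴴ + C̃C̃ᴴ − K Y S Y Kᴴ) πᴴ = 0. Then, with Υ := K Y Hᴴ + (I − (1/2)π̃) C̃C̃ᴴ, the Frobenius norms satisfy ‖R(X)‖_F = ‖π̃ Υᴴ + Υ π̃ᴴ‖_F. -/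
open Matrix

/-- The Frobenius norm of a complex matrix. -/
noncomputable def frobNorm {a b : ℕ} (M : Matrix (Fin a) (Fin b) ℂ) : ℝ :=
  Real.sqrt (∑ i, ∑ j, ‖M i j‖ ^ 2)

/-! Since `AᴴVK = VH` and `Cᴴ = VC̃`, the residual is `R(X) = V R Vᴴ` with the small matrix
`R := HYKᴴ + KYHᴴ + C̃C̃ᴴ − KYSYKᴴ`, and as `V` has orthonormal columns, `‖R(X)‖_F = ‖R‖_F`.
With `π = 1 − π̃`, the Galerkin condition `πRπᴴ = 0` reads `R = π̃R + Rπ̃ᴴ − π̃Rπ̃ᴴ`; since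
`π̃K = 0`, every term of `R` that meets `π̃` through a factor `K` vanishes, and what remains
regroups as `π̃Υᴴ + Υπ̃ᴴ`. -/

section FrobeniusNorm

variable {a b c : ℕ}

theorem frobNorm_eq_sqrt_re_trace (M : Matrix (Fin a) (Fin b) ℂ) :
    frobNorm M = Real.sqrt (trace (M * Mᴴ)).re := by
  unfold frobNorm
  congr 1
  simp [trace, mul_apply, Complex.re_sum, Complex.mul_conj, Complex.normSq_eq_norm_sq,
    -Complex.ofReal_pow]

theorem frobNorm_isometry_mul {V : Matrix (Fin c) (Fin a) ℂ} (hV : Vᴴ * V = 1)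
    (M : Matrix (Fin a) (Fin b) ℂ) : frobNorm (V * M) = frobNorm M := by
  rw [frobNorm_eq_sqrt_re_trace, frobNorm_eq_sqrt_re_trace, conjTranspose_mul, Matrix.mul_assoc,
    trace_mul_comm, Matrix.mul_assoc, Matrix.mul_assoc, hV, Matrix.mul_one]

theorem frobNorm_mul_conjTranspose_isometry {W : Matrix (Fin c) (Fin b) ℂ} (hW : Wᴴ * W = 1)
    (M : Matrix (Fin a) (Fin b) ℂ) : frobNorm (M * Wᴴ) = frobNorm M := by
  rw [frobNorm_eq_sqrt_re_trace, frobNorm_eq_sqrt_re_trace, conjTranspose_mul,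
    conjTranspose_conjTranspose, Matrix.mul_assoc, ← Matrix.mul_assoc Wᴴ, hW, Matrix.one_mul]

end FrobeniusNorm

theorem one_sub_mul_nonsing_inv_mul_mul_self {ι κ : Type*} [Fintype ι] [DecidableEq ι]
    [Fintype κ] [DecidableEq κ] {K : Matrix ι κ ℂ} {W : Matrix κ ι ℂ} (hWK : IsUnit (W * K)) :
    (1 - K * (W * K)⁻¹ * W) * K = 0 := by
  rw [Matrix.sub_mul, Matrix.one_mul, Matrix.mul_assoc _ W, Matrix.mul_assoc K,
    nonsing_inv_mul _ ((isUnit_iff_isUnit_det _).mp hWK), Matrix.mul_one, sub_self]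

theorem eq_of_one_sub_mul_mul_star_one_sub_eq_zero {R : Type*} [Ring R] [StarRing R]
    {P M : R} (h : (1 - P) * M * star (1 - P) = 0) :
    M = P * M + M * star P - P * M * star P := by
  rw [← sub_eq_zero, ← h, star_sub, star_one]
  noncomm_ring

section ProjectedResidual

variable {ι κ π : Type*} [Fintype ι] [DecidableEq ι] [Fintype κ] [Fintype π]

def projectedResidual (H K : Matrix ι κ ℂ) (Ct : Matrix ι π ℂ) (S Y : Matrix κ κ ℂ) :
    Matrix ι ι ℂ :=
  H * Y * Kᴴ + K * Y * Hᴴ + Ct * Ctᴴ - K * Y * S * Y * Kᴴ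

theorem riccatiResidual_eq_conj_projectedResidual {n m p q s : ℕ}
    {A : Matrix (Fin n) (Fin n) ℂ} (B : Matrix (Fin n) (Fin m) ℂ) {C : Matrix (Fin p) (Fin n) ℂ}
    {V : Matrix (Fin n) (Fin q) ℂ} {K H : Matrix (Fin q) (Fin s) ℂ} (hKH : Aᴴ * V * K = V * H)
    {Ct : Matrix (Fin q) (Fin p) ℂ} (hCt : Cᴴ = V * Ct) (Y : Matrix (Fin s) (Fin s) ℂ) :
    riccatiResidual A B C (V * K * Y * Kᴴ * Vᴴ) =
      V * projectedResidual H K Ct (Kᴴ * Vᴴ * B * Bᴴ * V * K) Y * Vᴴ := by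
  have hC : C = Ctᴴ * Vᴴ := by simpa using congrArg conjTranspose hCt
  have hKH' : Kᴴ * Vᴴ * A = Hᴴ * Vᴴ := by simpa [Matrix.mul_assoc] using congrArg conjTranspose hKH
  calc riccatiResidual A B C (V * K * Y * Kᴴ * Vᴴ)
      = (Aᴴ * V * K) * Y * Kᴴ * Vᴴ + V * K * Y * (Kᴴ * Vᴴ * A) + Cᴴ * C
          - V * K * Y * Kᴴ * Vᴴ * B * Bᴴ * V * K * Y * Kᴴ * Vᴴ := by
        simp only [riccatiResidual, Matrix.mul_assoc]
    _ = V * projectedResidual H K Ct (Kᴴ * Vᴴ * B * Bᴴ * V * K) Y * Vᴴ := by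
        rw [hKH, hKH', hCt, hC]
        simp only [projectedResidual, Matrix.mul_add, Matrix.add_mul, Matrix.mul_sub,
          Matrix.sub_mul, Matrix.mul_assoc]

theorem projectedResidual_split {P : Matrix ι ι ℂ} {K : Matrix ι κ ℂ} (hPK : P * K = 0)
    (H : Matrix ι κ ℂ) (Ct : Matrix ι π ℂ) (S : Matrix κ κ ℂ) {Y : Matrix κ κ ℂ} (hY : Yᴴ = Y) :
    let R := projectedResidual H K Ct S Y
    let Ups := K * Y * Hᴴ + (1 - (1/2 : ℂ) • P) * (Ct * Ctᴴ)
    P * R + R * Pᴴ - P * R * Pᴴ = P * Upsᴴ + Ups * Pᴴ := by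
  have hPK' : ∀ W : Matrix κ ι ℂ, P * (K * W) = 0 := fun W => by
    rw [← Matrix.mul_assoc, hPK, Matrix.zero_mul]
  have hKP : Kᴴ * Pᴴ = 0 := by simpa using congrArg conjTranspose hPK
  simp only [projectedResidual, conjTranspose_add, conjTranspose_mul, conjTranspose_sub,
    conjTranspose_smul, conjTranspose_conjTranspose, hY, Matrix.mul_add,
    Matrix.add_mul, Matrix.mul_sub, Matrix.sub_mul, smul_mul_assoc, mul_smul_comm,
    Matrix.mul_assoc, hPK', hKP, Matrix.mul_zero, Matrix.one_mul]
  rw [show star (1/2 : ℂ) = 1/2 by simp]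
  module

end ProjectedResidual

/-- `‖R(X)‖_F = ‖π̃ Υᴴ + Υ π̃ᴴ‖_F` when `Y` solves the
projected equation. -/
theorem stmt_6 {n m p q s : ℕ}
    (A : Matrix (Fin n) (Fin n) ℂ) (B : Matrix (Fin n) (Fin m) ℂ)
    (C : Matrix (Fin p) (Fin n) ℂ)
    (V : Matrix (Fin n) (Fin q) ℂ) (hV : Vᴴ * V = 1)
    (K H : Matrix (Fin q) (Fin s) ℂ) (hKH : Aᴴ * V * K = V * H)
    (Ct : Matrix (Fin q) (Fin p) ℂ) (hCt : Cᴴ = V * Ct)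
    (L : Matrix (Fin q) (Fin s) ℂ) (hLK : IsUnit (Lᴴ * K))
    (pr : Matrix (Fin q) (Fin q) ℂ) (hpr : pr = K * (Lᴴ * K)⁻¹ * Lᴴ)
    (pt : Matrix (Fin q) (Fin q) ℂ) (hpt : pt = 1 - pr)
    (Y : Matrix (Fin s) (Fin s) ℂ) (hY : Yᴴ = Y)
    (X : Matrix (Fin n) (Fin n) ℂ) (hX : X = V * K * Y * Kᴴ * Vᴴ)
    (S : Matrix (Fin s) (Fin s) ℂ) (hS : S = Kᴴ * Vᴴ * B * Bᴴ * V * K)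
    (hproj : pr * (H * Y * Kᴴ + K * Y * Hᴴ + Ct * Ctᴴ - K * Y * S * Y * Kᴴ)
        * prᴴ = 0)
    (Ups : Matrix (Fin q) (Fin q) ℂ)
    (hUps : Ups = K * Y * Hᴴ + (1 - (1/2 : ℂ) • pt) * (Ct * Ctᴴ)) :
    frobNorm (riccatiResidual A B C X) = frobNorm (pt * Upsᴴ + Ups * ptᴴ) := by
  have hptK : pt * K = 0 := hpt ▸ hpr ▸ one_sub_mul_nonsing_inv_mul_mul_self hLK
  have hpr' : pr = 1 - pt := by rw [hpt, sub_sub_cancel]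
  have hGalerkin : (1 - pt) * projectedResidual H K Ct S Y * star (1 - pt) = 0 := hpr' ▸ hproj
  rw [hX, riccatiResidual_eq_conj_projectedResidual B hKH hCt, ← hS,
    frobNorm_mul_conjTranspose_isometry hV, frobNorm_isometry_mul hV,
    eq_of_one_sub_mul_mul_star_one_sub_eq_zero hGalerkin, star_eq_conjTranspose,
    projectedResidual_split hptK H Ct S hY, hUps]
end

section
/- Let q = r + t. Let K ∈ ℂ^{q×s} have full column rank, H ∈ ℂ^{q×s}, C̃ ∈ ℂ^{q×p}, G ∈ ℂ^{q×m}, and let Y ∈ ℂ^{s×s} be Hermitian. Set S := Kᴴ G Gᴴ K. Let Q̂ ∈ ℂ^{q×r} and Q̌ ∈ ℂ^{q×t} satisfy Q̂ᴴQ̂ = I_r, Q̌ᴴQ̌ = I_t, Q̂ᴴQ̌ = 0, let Ŷ ∈ ℂ^{r×r} be Hermitian and Y̌ ∈ ℂ^{t×t} be such that K Y Kᴴ = Q̂ Ŷ Q̂ᴴ + Q̌ Y̌ Q̌ᴴ. Let T₁ ∈ ℂ^{s×r} satisfy K T₁ = Q̂, and set Ĥ := H T₁ ∈ ℂ^{q×r},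 Ŝ := Q̂ᴴ G Gᴴ Q̂ ∈ ℂ^{r×r}. Let L̂ ∈ ℂ^{q×r} have full column rank with L̂ᴴQ̌ = 0, and set π̂ := Q̂ (L̂ᴴQ̂)⁻¹ L̂ᴴ. Then π̂ ( H Y Kᴴ + K Y Hᴴ + C̃C̃ᴴ − K Y S Y Kᴴ ) π̂ᴴ = π̂ ( Ĥ Ŷ Q̂ᴴ + Q̂ Ŷ Ĥᴴ + C̃C̃ᴴ − Q̂ Ŷ Ŝ Ŷ Q̂ᴴ ) π̂ᴴ. -/
open Matrix

/-- under truncation `K Y Kᴴ = Q̂ Ŷ Q̂ᴴ + Q̌ Y̌ Q̌ᴴ`, the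
projected Riccati residual expressions built from `(K, H, Y)` and from the
truncated data `(Q̂, Ĥ, Ŷ)` coincide. -/
theorem stmt_13 {r t s p m : ℕ}
    (K H : Matrix (Fin (r + t)) (Fin s) ℂ)
    (hK : ∀ x : Fin s → ℂ, K.mulVec x = 0 → x = 0)
    (Ct : Matrix (Fin (r + t)) (Fin p) ℂ)
    (G : Matrix (Fin (r + t)) (Fin m) ℂ)
    (Y : Matrix (Fin s) (Fin s) ℂ) (hY : Yᴴ = Y)
    (S : Matrix (Fin s) (Fin s) ℂ) (hS : S = Kᴴ * G * Gᴴ * K)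
    (Qhat : Matrix (Fin (r + t)) (Fin r) ℂ)
    (Qchk : Matrix (Fin (r + t)) (Fin t) ℂ)
    (hQhat : Qhatᴴ * Qhat = 1) (hQchk : Qchkᴴ * Qchk = 1)
    (horth : Qhatᴴ * Qchk = 0)
    (Yhat : Matrix (Fin r) (Fin r) ℂ) (hYhat : Yhatᴴ = Yhat)
    (Ychk : Matrix (Fin t) (Fin t) ℂ)
    (hdecomp : K * Y * Kᴴ = Qhat * Yhat * Qhatᴴ + Qchk * Ychk * Qchkᴴ)
    (T₁ : Matrix (Fin s) (Fin r) ℂ) (hT₁ : K * T₁ = Qhat)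
    (Hhat : Matrix (Fin (r + t)) (Fin r) ℂ) (hHhat : Hhat = H * T₁)
    (Shat : Matrix (Fin r) (Fin r) ℂ) (hShat : Shat = Qhatᴴ * G * Gᴴ * Qhat)
    (Lhat : Matrix (Fin (r + t)) (Fin r) ℂ)
    (hLhat : ∀ x : Fin r → ℂ, Lhat.mulVec x = 0 → x = 0)
    (hLQ : Lhatᴴ * Qchk = 0)
    (pihat : Matrix (Fin (r + t)) (Fin (r + t)) ℂ)
    (hpihat : pihat = Qhat * (Lhatᴴ * Qhat)⁻¹ * Lhatᴴ) :
    pihat * (H * Y * Kᴴ + K * Y * Hᴴ + Ct * Ctᴴ - K * Y * S * Y * Kᴴ)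
        * pihatᴴ =
      pihat * (Hhat * Yhat * Qhatᴴ + Qhat * Yhat * Hhatᴴ + Ct * Ctᴴ
          - Qhat * Yhat * Shat * Yhat * Qhatᴴ) * pihatᴴ := by
  -- full column rank gives left cancellation of K
  have hKinj : ∀ {n : ℕ} (M : Matrix (Fin s) (Fin n) ℂ), K * M = 0 → M = 0 := by
    intro n M hM
    ext k j
    have hcol : K.mulVec (fun i => M i j) = 0 := by
      ext i
      simpa [Matrix.mulVec, dotProduct, Matrix.mul_apply] using congrFun (congrFun hM i) j
    have := congrFun (hK _ hcol) k
    simpa using this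
  have hπQchk : pihat * Qchk = 0 := by
    rw [hpihat, Matrix.mul_assoc, hLQ, Matrix.mul_zero]
  have hT : T₁ᴴ * Kᴴ = Qhatᴴ := by
    rw [← Matrix.conjTranspose_mul, hT₁]
  have hd2 : K * (Y * Kᴴ) = Qhat * (Yhat * Qhatᴴ) + Qchk * (Ychk * Qchkᴴ) := by
    simpa only [Matrix.mul_assoc] using hdecomp
  have key : pihat * (K * Y) = pihat * (Qhat * (Yhat * T₁ᴴ)) := by
    have h1 : (pihat * (K * Y) - pihat * (Qhat * (Yhat * T₁ᴴ))) * Kᴴ = 0 := by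
      have e1 : pihat * (K * Y) * Kᴴ = pihat * (Qhat * (Yhat * Qhatᴴ)) := by
        rw [Matrix.mul_assoc, Matrix.mul_assoc, hd2, Matrix.mul_add,
          ← Matrix.mul_assoc pihat Qchk _, hπQchk, Matrix.zero_mul, add_zero]
      have e2 : pihat * (Qhat * (Yhat * T₁ᴴ)) * Kᴴ = pihat * (Qhat * (Yhat * Qhatᴴ)) := by
        simp only [Matrix.mul_assoc, hT]
      rw [Matrix.sub_mul, e1, e2, sub_self]
    have h2 : K * (pihat * (K * Y) - pihat * (Qhat * (Yhat * T₁ᴴ)))ᴴ = 0 := by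
      have := congrArg Matrix.conjTranspose h1
      simpa [Matrix.conjTranspose_mul] using this
    have h3 := hKinj _ h2
    have h4 := congrArg Matrix.conjTranspose h3
    simp only [Matrix.conjTranspose_conjTranspose, Matrix.conjTranspose_zero] at h4
    exact sub_eq_zero.mp h4
  have keyT : Y * (Kᴴ * pihatᴴ) = T₁ * (Yhat * (Qhatᴴ * pihatᴴ)) := by
    have := congrArg Matrix.conjTranspose key
    simpa [Matrix.conjTranspose_mul, hY, hYhat, Matrix.mul_assoc] using this
  have keyM : ∀ {n : ℕ} (M : Matrix (Fin s) (Fin n) ℂ),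
      pihat * (K * (Y * M)) = pihat * (Qhat * (Yhat * (T₁ᴴ * M))) := by
    intro n M
    have := congrArg (· * M) key
    simpa only [Matrix.mul_assoc] using this
  have hKT : ∀ {n : ℕ} (M : Matrix (Fin r) (Fin n) ℂ), K * (T₁ * M) = Qhat * M := by
    intro n M
    rw [← Matrix.mul_assoc, hT₁]
  have hTM : ∀ {n : ℕ} (M : Matrix (Fin (r + t)) (Fin n) ℂ),
      T₁ᴴ * (Kᴴ * M) = Qhatᴴ * M := by
    intro n M
    rw [← Matrix.mul_assoc, hT]
  subst hHhat hShat hS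
  simp only [Matrix.mul_sub, Matrix.mul_add, Matrix.sub_mul, Matrix.add_mul,
    Matrix.conjTranspose_mul, Matrix.mul_assoc]
  rw [keyT]
  simp only [hKT, keyM, hTM]
end

section
/- (Truncation theorem.) Let q = r + t. Let K ∈ ℂ^{q×s} have full column rank, H ∈ ℂ^{q×s}, C̃ ∈ ℂ^{q×p}, G ∈ ℂ^{q×m}, and let Y ∈ ℂ^{s×s} be Hermitian; set S := Kᴴ G Gᴴ K. Let L ∈ ℂ^{q×s} be such that LᴴK is invertible and set π := K(LᴴK)⁻¹Lᴴ. Let Q̂ ∈ ℂ^{q×r}, Q̌ ∈ ℂ^{q×t} satisfy Q̂ᴴQ̂ = I_r, Q̌ᴴQ̌ = I_t, Q̂ᴴQ̌ = 0, let Ŷ ∈ ℂ^{r×r} be Hermitian and Y̌ ∈ ℂ^{t×t} be such that K Y Kᴴ = Q̂ Ŷ Q̂ᴴ + Q̌ Y̌ Q̌ᴴ. Let T₁ ∈ ℂ^{s×r} satisfy K T₁ = Q̂, and set Ĥ := H T₁, Ŝ := Q̂ᴴ G Gᴴ Q̂. Let L̂ ∈ ℂ^{q×r} have full column rank with L̂ᴴQ̌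 = 0, set π̂ := Q̂ (L̂ᴴQ̂)⁻¹ L̂ᴴ, and assume π̂ π = π̂. If Y satisfies the projected equation π ( H Y Kᴴ + K Y Hᴴ + C̃C̃ᴴ − K Y S Y Kᴴ ) πᴴ = 0, then the truncated solution satisfies the truncated projected equation π̂ ( Ĥ Ŷ Q̂ᴴ + Q̂ Ŷ Ĥᴴ + C̃C̃ᴴ − Q̂ Ŷ Ŝ Ŷ Q̂ᴴ ) π̂ᴴ = 0. -/
open Matrix

/-- Truncation theorem: if `Y` satisfies the projected Riccati
equation, then the truncated solution `Ŷ` satisfies the truncated projected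
Riccati equation. -/
theorem stmt_14 {r t s p m : ℕ}
    (K H : Matrix (Fin (r + t)) (Fin s) ℂ)
    (hK : ∀ x : Fin s → ℂ, K.mulVec x = 0 → x = 0)
    (Ct : Matrix (Fin (r + t)) (Fin p) ℂ)
    (G : Matrix (Fin (r + t)) (Fin m) ℂ)
    (Y : Matrix (Fin s) (Fin s) ℂ) (hY : Yᴴ = Y)
    (S : Matrix (Fin s) (Fin s) ℂ) (hS : S = Kᴴ * G * Gᴴ * K)
    (L : Matrix (Fin (r + t)) (Fin s) ℂ) (hLK : IsUnit (Lᴴ * K))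
    (pr : Matrix (Fin (r + t)) (Fin (r + t)) ℂ)
    (hpr : pr = K * (Lᴴ * K)⁻¹ * Lᴴ)
    (Qhat : Matrix (Fin (r + t)) (Fin r) ℂ)
    (Qchk : Matrix (Fin (r + t)) (Fin t) ℂ)
    (hQhat : Qhatᴴ * Qhat = 1) (hQchk : Qchkᴴ * Qchk = 1)
    (horth : Qhatᴴ * Qchk = 0)
    (Yhat : Matrix (Fin r) (Fin r) ℂ) (hYhat : Yhatᴴ = Yhat)
    (Ychk : Matrix (Fin t) (Fin t) ℂ)
    (hdecomp : K * Y * Kᴴ = Qhat * Yhat * Qhatᴴ + Qchk * Ychk * Qchkᴴ)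
    (T₁ : Matrix (Fin s) (Fin r) ℂ) (hT₁ : K * T₁ = Qhat)
    (Hhat : Matrix (Fin (r + t)) (Fin r) ℂ) (hHhat : Hhat = H * T₁)
    (Shat : Matrix (Fin r) (Fin r) ℂ) (hShat : Shat = Qhatᴴ * G * Gᴴ * Qhat)
    (Lhat : Matrix (Fin (r + t)) (Fin r) ℂ)
    (hLhat : ∀ x : Fin r → ℂ, Lhat.mulVec x = 0 → x = 0)
    (hLQ : Lhatᴴ * Qchk = 0)
    (pihat : Matrix (Fin (r + t)) (Fin (r + t)) ℂ)
    (hpihat : pihat = Qhat * (Lhatᴴ * Qhat)⁻¹ * Lhatᴴ)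
    (hcompat : pihat * pr = pihat)
    (hproj : pr * (H * Y * Kᴴ + K * Y * Hᴴ + Ct * Ctᴴ - K * Y * S * Y * Kᴴ)
        * prᴴ = 0) :
    pihat * (Hhat * Yhat * Qhatᴴ + Qhat * Yhat * Hhatᴴ + Ct * Ctᴴ
        - Qhat * Yhat * Shat * Yhat * Qhatᴴ) * pihatᴴ = 0 := by
  have hQch : pihat * Qchk = 0 := by
    rw [hpihat, Matrix.mul_assoc, hLQ, Matrix.mul_zero]
  have q0 : Qchkᴴ * pihatᴴ = 0 := by
    rw [← conjTranspose_mul, hQch, conjTranspose_zero]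
  have cancel : ∀ {n : ℕ} (A B : Matrix (Fin s) (Fin n) ℂ), K * A = K * B → A = B := by
    intro n A B h
    have hc : K * (A - B) = 0 := by rw [Matrix.mul_sub, h, sub_self]
    have hAB : A - B = 0 := by
      ext i j
      have hx : (fun k => (A - B) k j) = 0 := by
        apply hK
        ext i'
        have := congrFun (congrFun hc i') j
        simpa [Matrix.mulVec, dotProduct, Matrix.mul_apply] using this
      simpa using congrFun hx i
    exact sub_eq_zero.mp hAB
  have e1 : Y * (Kᴴ * pihatᴴ) = T₁ * (Yhat * (Qhatᴴ * pihatᴴ)) := by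
    apply cancel
    have lhs : K * (Y * (Kᴴ * pihatᴴ)) = (K * Y * Kᴴ) * pihatᴴ := by
      simp only [Matrix.mul_assoc]
    have rhs : K * (T₁ * (Yhat * (Qhatᴴ * pihatᴴ))) = Qhat * Yhat * Qhatᴴ * pihatᴴ := by
      rw [← Matrix.mul_assoc K T₁, hT₁]; simp only [Matrix.mul_assoc]
    rw [lhs, rhs, hdecomp, Matrix.add_mul, Matrix.mul_assoc (Qchk * Ychk), q0,
      Matrix.mul_zero, add_zero]
  have e5 : pihat * K * Y = pihat * Qhat * Yhat * T₁ᴴ := by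
    have h := congrArg conjTranspose e1
    simp only [conjTranspose_mul, conjTranspose_conjTranspose, hY, hYhat] at h
    simpa only [Matrix.mul_assoc] using h
  have rq2 : ∀ {n : ℕ} (Z : Matrix (Fin s) (Fin n) ℂ),
      pihat * (K * (Y * Z)) = pihat * (Qhat * (Yhat * (T₁ᴴ * Z))) := by
    intro n Z
    have h := congrArg (· * Z) e5
    simpa only [Matrix.mul_assoc] using h
  have hKT : ∀ {n : ℕ} (W : Matrix (Fin r) (Fin n) ℂ), K * (T₁ * W) = Qhat * W := by
    intro n W; rw [← Matrix.mul_assoc, hT₁]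
  have hT₁K : T₁ᴴ * Kᴴ = Qhatᴴ := by rw [← conjTranspose_mul, hT₁]
  have hTK : ∀ {n : ℕ} (W : Matrix (Fin (r + t)) (Fin n) ℂ),
      T₁ᴴ * (Kᴴ * W) = Qhatᴴ * W := by
    intro n W; rw [← Matrix.mul_assoc, hT₁K]
  have hTH : ∀ {n : ℕ} (W : Matrix (Fin (r + t)) (Fin n) ℂ),
      T₁ᴴ * (Hᴴ * W) = Hhatᴴ * W := by
    intro n W; rw [← Matrix.mul_assoc, hHhat, conjTranspose_mul]
  have hc' : prᴴ * pihatᴴ = pihatᴴ := by rw [← conjTranspose_mul, hcompat]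
  have h0 : pihat * (H * Y * Kᴴ + K * Y * Hᴴ + Ct * Ctᴴ - K * Y * S * Y * Kᴴ)
      * pihatᴴ = 0 := by
    calc pihat * (H * Y * Kᴴ + K * Y * Hᴴ + Ct * Ctᴴ - K * Y * S * Y * Kᴴ) * pihatᴴ
        = (pihat * pr) * (H * Y * Kᴴ + K * Y * Hᴴ + Ct * Ctᴴ - K * Y * S * Y * Kᴴ)
          * (prᴴ * pihatᴴ) := by rw [hcompat, hc']
      _ = pihat * (pr * (H * Y * Kᴴ + K * Y * Hᴴ + Ct * Ctᴴ - K * Y * S * Y * Kᴴ)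
          * prᴴ) * pihatᴴ := by simp only [Matrix.mul_assoc]
      _ = 0 := by rw [hproj, Matrix.mul_zero, Matrix.zero_mul]
  subst hHhat hShat hS
  simp only [Matrix.mul_add, Matrix.mul_sub, Matrix.add_mul, Matrix.sub_mul,
    conjTranspose_mul, Matrix.mul_assoc] at h0 ⊢
  rw [e1, rq2, rq2] at h0
  simp only [hKT, hTK, hTH] at h0 ⊢
  convert h0 using 2
end
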